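/- Let a ∈ ℂⁿ with n ≥ 2. If max_k |a_k| ≤ (1/2) Σ_{k=1}^n |a_k|, then there exist angles θ₁,…,θₙ ∈ [0, 2π) such that Σ_{k=1}^n e^{iθ_k} a_k = 0. -/

import Mathlib

/-!
With `r k = ‖a k‖` and `S = ∑ r k`, add the `r k` one at a time until the running total first
passes `S / 2`: this gives a block `A` and an index `k ∉ A` with `∑_A r ≤ S / 2 ≤ ∑_A r + r k`.
The three sums over `A`, over `{k}` and over the remaining indices are then each at most `S / 2`,
so they are the side lengths of a (possibly degenerate) triangle. Closing that triangle with unit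
vectors `u₁, u₂, u₃` and rotating every `a k` onto the direction of its part makes the sum vanish.
-/
open Complex Finset Real

theorem exists_mem_Ico_exp_mul_I_eq {w : ℂ} (hw : ‖w‖ = 1) :
    ∃ θ ∈ Set.Ico 0 (2 * π), exp (θ * I) = w := by
  obtain ⟨φ, rfl⟩ := (norm_eq_one_iff w).1 hw
  have hper : Function.Periodic (fun θ : ℝ => exp (θ * I)) (2 * π) := fun θ => by
    simpa using exp_mul_I_periodic (θ : ℂ)
  refine ⟨toIcoMod two_pi_pos 0 φ, toIcoMod_mem_Ico' _ _, ?_⟩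
  rw [← self_sub_toIcoDiv_zsmul]
  exact hper.sub_zsmul_eq _

theorem exists_mem_Ico_exp_mul_I_mul_eq {u : ℂ} (hu : ‖u‖ = 1) (a : ℂ) :
    ∃ θ ∈ Set.Ico 0 (2 * π), exp (θ * I) * a = ‖a‖ * u := by
  rcases eq_or_ne a 0 with rfl | ha
  · exact ⟨0, ⟨le_rfl, two_pi_pos⟩, by simp⟩
  have hw : ‖‖a‖ * u / a‖ = 1 := by
    rw [norm_div, norm_mul, hu, norm_real, norm_norm, mul_one, div_self (norm_ne_zero_iff.2 ha)]
  obtain ⟨θ, hθ, hθw⟩ := exists_mem_Ico_exp_mul_I_eq hw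
  exact ⟨θ, hθ, by rw [hθw, div_mul_cancel₀ _ ha]⟩

theorem exists_norm_add_mul_eq {s₁ s₂ d : ℝ} (h₁ : 0 ≤ s₁) (h₂ : 0 ≤ s₂)
    (hlo : |s₁ - s₂| ≤ d) (hhi : d ≤ s₁ + s₂) :
    ∃ w : ℂ, ‖w‖ = 1 ∧ ‖(s₁ : ℂ) + s₂ * w‖ = d := by
  set f : ℝ → ℝ := fun t => ‖(s₁ : ℂ) + s₂ * exp (t * I)‖
  have hf0 : f 0 = s₁ + s₂ := by
    simp only [f, ofReal_zero, zero_mul, Complex.exp_zero, mul_one]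
    rw [← ofReal_add, norm_real, norm_of_nonneg (add_nonneg h₁ h₂)]
  have hfπ : f π = |s₁ - s₂| := by
    simp only [f, exp_pi_mul_I, mul_neg_one, ← sub_eq_add_neg]
    rw [← ofReal_sub, norm_real, Real.norm_eq_abs]
  obtain ⟨t, -, ht⟩ := intermediate_value_Icc' pi_pos.le (by fun_prop)
    (show d ∈ Set.Icc (f π) (f 0) by rw [hf0, hfπ]; exact ⟨hlo, hhi⟩)
  exact ⟨exp (t * I), norm_exp_ofReal_mul_I t, ht⟩

theorem exists_unit_triangle {s₁ s₂ s₃ : ℝ}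
    (t₁ : s₁ ≤ s₂ + s₃) (t₂ : s₂ ≤ s₁ + s₃) (t₃ : s₃ ≤ s₁ + s₂) :
    ∃ u₁ u₂ u₃ : ℂ, ‖u₁‖ = 1 ∧ ‖u₂‖ = 1 ∧ ‖u₃‖ = 1 ∧ s₁ * u₁ + s₂ * u₂ + s₃ * u₃ = 0 := by
  rcases eq_or_ne s₃ 0 with rfl | hs₃
  · obtain rfl : s₁ = s₂ := by linarith
    exact ⟨1, -1, 1, by simp, by simp, by simp, by simp⟩
  obtain ⟨w, hw, hd⟩ := exists_norm_add_mul_eq (s₁ := s₁) (s₂ := s₂) (d := s₃)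
    (by linarith) (by linarith) (abs_sub_le_iff.2 ⟨by linarith, by linarith⟩) t₃
  refine ⟨1, w, -(s₁ + s₂ * w) / s₃, by simp, hw, ?_, ?_⟩
  · rw [norm_div, norm_neg, hd, norm_real, Real.norm_eq_abs, abs_of_nonneg (by linarith),
      div_self hs₃]
  · rw [mul_div_cancel₀ _ (ofReal_ne_zero.2 hs₃)]
    ring

theorem Finset.exists_sum_le_le_sum_add {ι : Type*} (r : ι → ℝ) {s : Finset ι}
    (hs : s.Nonempty) {t : ℝ} (ht₀ : 0 ≤ t) (ht : t ≤ ∑ i ∈ s, r i) :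
    ∃ A ⊆ s, ∃ k ∈ s, k ∉ A ∧ ∑ i ∈ A, r i ≤ t ∧ t ≤ ∑ i ∈ A, r i + r k := by
  induction hs using Finset.Nonempty.cons_induction with
  | singleton x =>
    exact ⟨∅, empty_subset _, x, mem_singleton_self x, notMem_empty x, by simpa using ht₀,
      by simpa using ht⟩
  | cons x s hx hs ih =>
    rw [sum_cons] at ht
    by_cases hts : t ≤ ∑ i ∈ s, r i
    · obtain ⟨A, hA, k, hk, hkA, hle, hge⟩ := ih hts
      exact ⟨A, hA.trans (subset_cons hx), k, mem_cons_of_mem hk, hkA, hle, hge⟩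
    · exact ⟨s, subset_cons hx, x, mem_cons_self x s, hx, (not_le.1 hts).le, by linarith⟩

theorem exists_unit_sum_mul_eq_zero {ι : Type*} [Fintype ι] (r : ι → ℝ) (hr : ∀ i, 0 ≤ r i)
    (h : ∀ i, r i ≤ (∑ j, r j) / 2) :
    ∃ u : ι → ℂ, (∀ i, ‖u i‖ = 1) ∧ ∑ i, r i * u i = 0 := by
  classical
  rcases isEmpty_or_nonempty ι with hι | hι
  · exact ⟨fun _ => 1, by simp, by simp⟩
  have hS : 0 ≤ ∑ j, r j := sum_nonneg fun j _ => hr j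
  obtain ⟨A, -, k, -, hkA, hA, hAk⟩ :=
    exists_sum_le_le_sum_add r univ_nonempty (by linarith) (half_le_self hS)
  have hsplit : ∀ f : ι → ℂ, ∑ i, f i = f k + ∑ i ∈ A, f i + ∑ i ∈ (insert k A)ᶜ, f i :=
    fun f => by rw [← sum_add_sum_compl (insert k A), sum_insert hkA]
  have hr_split := sum_add_sum_compl (insert k A) r
  rw [sum_insert hkA] at hr_split
  obtain ⟨u₁, u₂, u₃, hu₁, hu₂, hu₃, hu⟩ := exists_unit_triangle (s₁ := r k)
    (s₂ := ∑ i ∈ A, r i) (s₃ := ∑ i ∈ (insert k A)ᶜ, r i)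
    (by linarith [h k]) (by linarith) (by linarith)
  set u : ι → ℂ := fun i => if i = k then u₁ else if i ∈ A then u₂ else u₃
  refine ⟨u, fun i => by dsimp only [u]; split_ifs <;> assumption, ?_⟩
  have hA_eq : ∑ i ∈ A, (r i : ℂ) * u i = (∑ i ∈ A, r i : ℝ) * u₂ := by
    rw [ofReal_sum, sum_mul]
    refine sum_congr rfl fun i hi => ?_
    dsimp only [u]
    rw [if_neg (ne_of_mem_of_not_mem hi hkA), if_pos hi]
  have hC_eq : ∑ i ∈ (insert k A)ᶜ, (r i : ℂ) * u i = (∑ i ∈ (insert k A)ᶜ, r i : ℝ) * u₃ := by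
    rw [ofReal_sum, sum_mul]
    refine sum_congr rfl fun i hi => ?_
    rw [mem_compl, mem_insert, not_or] at hi
    dsimp only [u]
    rw [if_neg hi.1, if_neg hi.2]
  rw [hsplit, hA_eq, hC_eq, ← hu]
  dsimp only [u]
  rw [if_pos rfl]

theorem stmt5 {n : ℕ} (a : Fin n → ℂ)
    (h : ∀ k, ‖a k‖ ≤ (1 / 2) * ∑ j, ‖a j‖) :
    ∃ θ : Fin n → ℝ, (∀ k, θ k ∈ Set.Ico 0 (2 * Real.pi)) ∧
      ∑ k, Complex.exp ((θ k : ℂ) * Complex.I) * a k = 0 := by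
  obtain ⟨u, hu, hsum⟩ := exists_unit_sum_mul_eq_zero (fun k => ‖a k‖) (fun k => norm_nonneg _)
    fun k => by linarith [h k]
  choose θ hθ hrot using fun k => exists_mem_Ico_exp_mul_I_mul_eq (hu k) (a k)
  exact ⟨θ, hθ, by simpa only [hrot] using hsum⟩
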